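/- Define on W = H¹_null(Ω^B) × H^{1/2}_0(Γ,Ω) the bilinear form a((w,r),(w̄,s)) := ∫_{Ω^B} σ^int ∇(w+R)·∇(w̄+R̄) dx + ∫_{Ω^B} σ^out ∇R·∇R̄ dx + ∫_{Ω^D} σ^dis ∇R·∇R̄ dx + β ∫_Γ r s dσ, where R, R̄ ∈ X¹₀(Ω) are the solutions of the auxiliary transmission problem associated with (w,r) and (w̄,s) respectively, and β > 0. Then a is symmetric. -/
import Mathlib

open MeasureTheory
open scoped RealInnerProductSpace

/-- Weak solution (pieces `RB`, `RD`) of the auxiliary transmission problem with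
data `(w, r)`. -/
def IsTransmissionSol {N : ℕ} (Ω ΩB ΩD Γ : Set (EuclideanSpace ℝ (Fin N)))
    (σi σo σd : EuclideanSpace ℝ (Fin N) → ℝ)
    (w r RB RD : EuclideanSpace ℝ (Fin N) → ℝ) : Prop :=
  ContinuousOn RB (closure ΩB) ∧ ContinuousOn RD (closure ΩD) ∧
  DifferentiableOn ℝ RB ΩB ∧ DifferentiableOn ℝ RD ΩD ∧
  IntegrableOn (fun x => (RB x)^2) ΩB ∧ IntegrableOn (fun x => (RD x)^2) ΩD ∧
  IntegrableOn (fun x => ‖gradient RB x‖^2) ΩB ∧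
  IntegrableOn (fun x => ‖gradient RD x‖^2) ΩD ∧
  (∀ x ∈ Γ, RB x - RD x = r x) ∧
  (∀ x ∈ frontier ΩB ∩ frontier Ω, RB x = 0) ∧
  (∀ x ∈ frontier ΩD ∩ frontier Ω, RD x = 0) ∧
  (∀ φ : EuclideanSpace ℝ (Fin N) → ℝ,
    ContinuousOn φ (closure Ω) → DifferentiableOn ℝ φ Ω →
    (∀ x ∈ frontier Ω, φ x = 0) →
    IntegrableOn (fun x => (φ x)^2) Ω → IntegrableOn (fun x => ‖gradient φ x‖^2) Ω →
    (∫ x in ΩB, (σi x + σo x) * ⟪gradient RB x, gradient φ x⟫) +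
      (∫ x in ΩD, σd x * ⟪gradient RD x, gradient φ x⟫) =
      -∫ x in ΩB, σi x * ⟪gradient w x, gradient φ x⟫)

/-- The bilinear form `a((w,r),(w̄,s))` of the modified bidomain model, expressed via
the auxiliary solutions `R = (RB, RD)` and `R̄ = (SB, SD)`:
`∫_{Ω^B} σ^int ∇(w+R)·∇(w̄+R̄) + ∫_{Ω^B} σ^out ∇R·∇R̄ + ∫_{Ω^D} σ^dis ∇R·∇R̄ + β∫_Γ r s`. -/
noncomputable def bilinA {N : ℕ} (ΩB ΩD Γ : Set (EuclideanSpace ℝ (Fin N)))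
    (σΓ : Measure (EuclideanSpace ℝ (Fin N)))
    (σi σo σd : EuclideanSpace ℝ (Fin N) → ℝ) (β : ℝ)
    (w r RB RD wb s SB SD : EuclideanSpace ℝ (Fin N) → ℝ) : ℝ :=
  (∫ x in ΩB, σi x * ⟪gradient (fun y => w y + RB y) x,
      gradient (fun y => wb y + SB y) x⟫) +
    (∫ x in ΩB, σo x * ⟪gradient RB x, gradient SB x⟫) +
    (∫ x in ΩD, σd x * ⟪gradient RD x, gradient SD x⟫) +
    β * ∫ x in Γ, r x * s x ∂σΓ

/-- the bilinear form `a` is symmetric. -/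
theorem stmt_9 (N : ℕ) (hN : 3 ≤ N)
    (Ω ΩB ΩD Γ : Set (EuclideanSpace ℝ (Fin N)))
    (hΩo : IsOpen Ω) (hBo : IsOpen ΩB) (hDo : IsOpen ΩD) (hdisj : Disjoint ΩB ΩD)
    (hBsub : ΩB ⊆ Ω) (hDsub : ΩD ⊆ Ω) (hunion : Ω = ΩB ∪ ΩD ∪ Γ)
    (hΓB : Γ = frontier ΩB ∩ Ω) (hΓD : Γ = frontier ΩD ∩ Ω)
    (σΓ : Measure (EuclideanSpace ℝ (Fin N))) (hσΓ : σΓ Γᶜ = 0)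
    (σi σo σd : EuclideanSpace ℝ (Fin N) → ℝ) (c₀ C₀ : ℝ) (hc₀ : 0 < c₀)
    (hσi : ∀ x ∈ ΩB, c₀ ≤ σi x ∧ σi x ≤ C₀) (hσo : ∀ x ∈ ΩB, c₀ ≤ σo x ∧ σo x ≤ C₀)
    (hσd : ∀ x ∈ ΩD, c₀ ≤ σd x ∧ σd x ≤ C₀)
    (β : ℝ) (hβ : 0 < β)
    (w r RB RD wb s SB SD : EuclideanSpace ℝ (Fin N) → ℝ)
    (hR : IsTransmissionSol Ω ΩB ΩD Γ σi σo σd w r RB RD)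
    (hS : IsTransmissionSol Ω ΩB ΩD Γ σi σo σd wb s SB SD) :
    bilinA ΩB ΩD Γ σΓ σi σo σd β w r RB RD wb s SB SD =
      bilinA ΩB ΩD Γ σΓ σi σo σd β wb s SB SD w r RB RD := by
  have key : ∀ (f g : EuclideanSpace ℝ (Fin N) → ℝ)
      (σ : EuclideanSpace ℝ (Fin N) → ℝ),
      (fun x => σ x * ⟪gradient f x, gradient g x⟫) =
        (fun x => σ x * ⟪gradient g x, gradient f x⟫) := by
    intro f g σ; funext x; rw [real_inner_comm]
  have key2 : (fun x => r x * s x) = fun x => s x * r x := by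
    funext x; ring
  unfold bilinA
  rw [key (fun y => w y + RB y) (fun y => wb y + SB y), key RB SB, key RD SD, key2]
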